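/- Let B be a supersoluble brace. Then the derived ideal ∂(B) satisfies ∂(B) = Soc_n(∂(B)) for some n ∈ ℕ, i.e. ∂(B) has finite multipermutational level. -/

import Mathlib

/-- A (skew left) brace: a set with an additive group structure (not necessarily abelian)
and a multiplicative group structure sharing the same identity, satisfying the skew
distributive law `a * (b + c) = a * b + -a + a * c`. -/
class SkewBrace (B : Type*) extends AddGroup B, Group B where
  one_eq_zero : (1 : B) = (0 : B)
  skew_distrib : ∀ a b c : B, a * (b + c) = a * b + -a + a * c

/-- A group is supersoluble if it has a finite chain of normal subgroups with all
factors cyclic. -/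
def Group.IsSupersoluble (G : Type*) [Group G] : Prop :=
  ∃ (n : ℕ) (H : ℕ → Subgroup G),
    H 0 = ⊥ ∧ H n = ⊤ ∧ (∀ i, (H i).Normal) ∧ (∀ i, i < n → H i ≤ H (i + 1)) ∧
    ∀ i, i < n → ∃ x ∈ H (i + 1), ∀ y ∈ H (i + 1), ∃ k : ℤ, (x ^ k)⁻¹ * y ∈ H i

namespace SkewBrace

variable {B : Type*} [SkewBrace B]

/-- `lam a b = -a + a * b`, i.e. `λ_a(b)`. -/
def lam (a b : B) : B := -a + a * b

/-- the star operation `a ∗ b = λ_a(b) - b`. -/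
def starOp (a b : B) : B := lam a b + -b

/-- the additive commutator `[a,b]_+`. -/
def addCommutator (a b : B) : B := -a + -b + a + b

/-- A subbrace of `B`: a subset that is a subgroup of both `(B,+)` and `(B,·)`. -/
structure Subbrace (B : Type*) [SkewBrace B] where
  carrier : Set B
  zero_mem : (0 : B) ∈ carrier
  add_mem : ∀ {a b : B}, a ∈ carrier → b ∈ carrier → a + b ∈ carrier
  neg_mem : ∀ {a : B}, a ∈ carrier → -a ∈ carrier
  mul_mem : ∀ {a b : B}, a ∈ carrier → b ∈ carrier → a * b ∈ carrier
  inv_mem : ∀ {a : B}, a ∈ carrier → a⁻¹ ∈ carrier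

/-- An ideal of `B`: a subbrace that is normal in `(B,+)` and in `(B,·)` and is
invariant under all the maps `λ_b`. -/
structure BraceIdeal (B : Type*) [SkewBrace B] extends Subbrace B where
  addConj_mem : ∀ (b : B) {a : B}, a ∈ carrier → b + a + -b ∈ carrier
  mulConj_mem : ∀ (b : B) {a : B}, a ∈ carrier → b * a * b⁻¹ ∈ carrier
  lam_mem : ∀ (b : B) {a : B}, a ∈ carrier → lam b a ∈ carrier

/-- The additive subgroup underlying a subbrace. -/
def Subbrace.addSubgroup (S : Subbrace B) : AddSubgroup B where
  carrier := S.carrier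
  zero_mem' := S.zero_mem
  add_mem' := S.add_mem
  neg_mem' := S.neg_mem

/-- The multiplicative subgroup underlying a subbrace. -/
def Subbrace.subgroup (S : Subbrace B) : Subgroup B where
  carrier := S.carrier
  one_mem' := by rw [one_eq_zero]; exact S.zero_mem
  mul_mem' := S.mul_mem
  inv_mem' := S.inv_mem

/-- Given ideals `J ≤ I` of `B`, `MemSocQuotRel I J x` says that the coset of `x`
lies in `Soc(I/J) = Ker(λ) ∩ Z(I/J, +)` (for `I = B` take `I = Set.univ`). -/
def MemSocQuotRel (I J : Set B) (x : B) : Prop :=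
  x ∈ I ∧ (∀ y ∈ I, -y + lam x y ∈ J) ∧ ∀ y ∈ I, -(y + x) + (x + y) ∈ J

/-- Given ideals `J ≤ I` of `B`, `MemZetaQuotRel I J x` says that the coset of `x`
lies in `ζ(I/J) = Soc(I/J) ∩ Z(I/J, ·)`. -/
def MemZetaQuotRel (I J : Set B) (x : B) : Prop :=
  MemSocQuotRel I J x ∧ ∀ y ∈ I, (y * x)⁻¹ * (x * y) ∈ J

/-- The coset of `x` lies in `Soc(B/J)`. -/
def MemSocQuot (J : Set B) (x : B) : Prop := MemSocQuotRel Set.univ J x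

/-- The coset of `x` lies in `ζ(B/J)`. -/
def MemZetaQuot (J : Set B) (x : B) : Prop := MemZetaQuotRel Set.univ J x

/-- For ideals `I ≤ J`, the additive group of the quotient `J/I` is infinite cyclic. -/
def QuotAddInfCyclic (I J : Set B) : Prop :=
  ∃ x ∈ J, (∀ y ∈ J, ∃ n : ℤ, -(n • x) + y ∈ I) ∧ ∀ n : ℤ, n • x ∈ I → n = 0

/-- For ideals `I ≤ J`, the quotient `J/I` has prime order `p`. -/
def QuotPrimeOrder (I J : Set B) (p : ℕ) : Prop :=
  p.Prime ∧ ∃ x ∈ J, x ∉ I ∧ p • x ∈ I ∧ ∀ y ∈ J, ∃ n : ℤ, -(n • x) + y ∈ I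

/-- A brace is supersoluble if it has a finite chain of ideals each factor of which
either is additively infinite cyclic and contained in the socle of the corresponding
quotient, or has prime order. -/
def IsSupersoluble (B : Type*) [SkewBrace B] : Prop :=
  ∃ (n : ℕ) (I : ℕ → BraceIdeal B),
    (I 0).carrier = {0} ∧ (I n).carrier = Set.univ ∧
    (∀ i, i < n → (I i).carrier ⊆ (I (i + 1)).carrier) ∧
    ∀ i, i < n →
      (QuotAddInfCyclic (I i).carrier (I (i + 1)).carrier ∧
        ∀ x ∈ (I (i + 1)).carrier, MemSocQuot (I i).carrier x) ∨
      ∃ p : ℕ, QuotPrimeOrder (I i).carrier (I (i + 1)).carrier p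

/-- The upper socle series of the brace (carrier of the ideal) `I`. -/
def socChainRel (I : Set B) : ℕ → Set B
  | 0 => {0}
  | n + 1 => {x | MemSocQuotRel I (socChainRel I n) x}

/-- The upper central series of the brace (carrier of the ideal) `I`. -/
def zetaChainRel (I : Set B) : ℕ → Set B
  | 0 => {0}
  | n + 1 => {x | MemZetaQuotRel I (zetaChainRel I n) x}

/-- The upper socle series `Soc_n(B)` of `B`. -/
def socChain (B : Type*) [SkewBrace B] : ℕ → Set B := socChainRel Set.univ

/-- The upper central series `ζ_n(B)` of `B`. -/
def zetaChain (B : Type*) [SkewBrace B] : ℕ → Set B := zetaChainRel Set.univ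

/-- A brace is centrally nilpotent if its upper central series reaches `B`. -/
def IsCentrallyNilpotent (B : Type*) [SkewBrace B] : Prop :=
  ∃ m : ℕ, zetaChain B m = Set.univ

end SkewBrace

namespace SkewBrace

/-- The derived ideal `∂(B)`: the additive subgroup of `B` generated by all the
elements `a ∗ b` and all the additive commutators `[a,b]_+`. -/
def derivedIdeal (B : Type*) [SkewBrace B] : Set B :=
  ↑(AddSubgroup.closure
      {z : B | (∃ a b : B, z = starOp a b) ∨ ∃ a b : B, z = addCommutator a b})

/-!
Along the supersoluble chain `0 = I₀ ≤ ⋯ ≤ Iₙ = B` one shows by induction that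
`Iᵢ ∩ ∂(B) ⊆ Socᵢ(∂(B))`: it suffices that every element of `Iᵢ₊₁` acts on `∂(B)` like an
element of the socle modulo `Iᵢ`. For an infinite cyclic factor this is part of the hypothesis.
For a factor of prime order pass to `B/Iᵢ`, where it becomes an ideal `P = ⟨x⟩` of order `p`.
Additive conjugations and the maps `λ_b` act on `P` by scalars, hence commute on `P`; therefore
additive commutators and the elements `a ∗ b` centralise `P`, and so does `∂(B)`. On the
centraliser of `P`, `w ↦ y ∗ w` (for `y ∈ P`) is an additive map into `P`; were it nonzero, its
image would be all of `P` and contain `-y`, giving `y · v = v` for some `v`, i.e. `y = 0`.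
-/

end SkewBrace

open AddSubgroup (zmultiples mem_zmultiples mem_zmultiples_iff)

section ZMultiples

variable {G : Type*} [AddGroup G]

theorem map_map_comm_of_mem_zmultiples {F₁ F₂ : Type*}
    [FunLike F₁ G G] [AddMonoidHomClass F₁ G G] [FunLike F₂ G G] [AddMonoidHomClass F₂ G G]
    (φ : F₁) (ψ : F₂) {x y : G}
    (hφ : φ x ∈ zmultiples x) (hψ : ψ x ∈ zmultiples x) (hy : y ∈ zmultiples x) :
    φ (ψ y) = ψ (φ y) := by
  obtain ⟨k, rfl⟩ := hy
  obtain ⟨m, hm⟩ := hφ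
  obtain ⟨n, hn⟩ := hψ
  rw [map_zsmul, map_zsmul, ← hn, map_zsmul, ← hm, map_zsmul, map_zsmul, ← hm, map_zsmul, ← hn,
    zsmul_comm x m n]

theorem zmultiples_eq_of_mem_of_ne_zero {x z : G} (hx : (addOrderOf x).Prime)
    (hz : z ∈ zmultiples x) (hz₀ : z ≠ 0) : zmultiples z = zmultiples x := by
  have := Fact.mk hx
  refine (AddSubgroup.zmultiples_le_of_mem hz).antisymm (AddSubgroup.zmultiples_le_of_mem ?_)
  obtain ⟨k, hk⟩ := mem_zmultiples_iff.mp <|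
    mem_zmultiples_of_prime_card (Nat.card_zmultiples x) (g := ⟨z, hz⟩)
      (g' := ⟨x, mem_zmultiples x⟩) fun h => hz₀ (congrArg Subtype.val h)
  exact mem_zmultiples_iff.mpr ⟨k, congrArg Subtype.val hk⟩

end ZMultiples

namespace SkewBrace

section Basic

variable {C : Type*} [SkewBrace C]

theorem lam_add (a b c : C) : lam a (b + c) = lam a b + lam a c := by
  simp only [lam, skew_distrib, add_assoc]

def lamHom (a : C) : C →+ C := AddMonoidHom.mk' (lam a) (lam_add a)

theorem lam_neg (a b : C) : lam a (-b) = -lam a b := (lamHom a).map_neg b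

theorem lam_conj (a b y : C) : lam a (b + y + -b) = lam a b + lam a y + -lam a b := by
  rw [lam_add, lam_add, lam_neg]

theorem mul_eq_add_lam (a b : C) : a * b = a + lam a b := by
  rw [lam, add_neg_cancel_left]

theorem lam_mul (a b c : C) : lam (a * b) c = lam a (lam b c) := by
  rw [show lam b c = -b + b * c from rfl, lam_add, lam_neg]
  simp only [lam, neg_add_rev, neg_neg, mul_assoc, add_assoc, add_neg_cancel_left]

theorem lam_one (c : C) : lam 1 c = c := by
  rw [lam, one_mul, one_eq_zero, neg_zero, zero_add]

theorem lam_zero_left (c : C) : lam 0 c = c := by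
  rw [← one_eq_zero, lam_one]

theorem lam_inv_lam (a b : C) : lam a (lam a⁻¹ b) = b := by
  rw [← lam_mul, mul_inv_cancel, lam_one]

theorem inv_mul_eq_lam (a b : C) : a⁻¹ * b = lam a⁻¹ (-a + b) := by
  have h : lam a⁻¹ a = -a⁻¹ := by rw [lam, inv_mul_cancel, one_eq_zero, add_zero]
  rw [lam_add, lam_neg, h, neg_neg, ← mul_eq_add_lam]

theorem lam_eq_starOp_add (a b : C) : lam a b = starOp a b + b := by
  rw [starOp, neg_add_cancel_right]

theorem starOp_add (y a b : C) : starOp y (a + b) = starOp y a + (a + starOp y b + -a) := by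
  simp only [starOp, lam_add, neg_add_rev, add_assoc, neg_add_cancel_left]

theorem neg_add_add_eq_addCommutator (x y : C) : -(y + x) + (x + y) = addCommutator x y := by
  simp only [addCommutator, neg_add_rev, add_assoc]

end Basic

section DerivedIdeal

variable {C : Type*} [SkewBrace C]

theorem starOp_mem_derivedIdeal (a b : C) : starOp a b ∈ derivedIdeal C :=
  AddSubgroup.subset_closure (Or.inl ⟨a, b, rfl⟩)

theorem addCommutator_mem_derivedIdeal (a b : C) : addCommutator a b ∈ derivedIdeal C :=
  AddSubgroup.subset_closure (Or.inr ⟨a, b, rfl⟩)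

theorem neg_add_lam_mem_derivedIdeal (x y : C) : -y + lam x y ∈ derivedIdeal C := by
  have h : -y + lam x y = starOp x y + addCommutator (starOp x y) y := by
    simp only [lam_eq_starOp_add, addCommutator, add_assoc, add_neg_cancel_left]
  rw [h]
  exact (AddSubgroup.closure _).add_mem (starOp_mem_derivedIdeal x y)
    (addCommutator_mem_derivedIdeal _ y)

end DerivedIdeal

section PrimeOrder

variable {C : Type*} [SkewBrace C]

theorem addCommute_of_mem_derivedIdeal {x : C} (hlam : ∀ b, lam b x ∈ zmultiples x)
    (hconj : ∀ b, b + x + -b ∈ zmultiples x) {w : C} (hw : w ∈ derivedIdeal C) :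
    AddCommute x w := by
  let c := AddAut.addConj (G := C)
  have hc : ∀ b, c b x ∈ zmultiples x := hconj
  have hc_add : ∀ a b y, c (a + b) y = c a (c b y) := by simp [c, add_assoc]
  have hc_neg : ∀ b y, c (-b) (c b y) = y := by simp [c, add_assoc]
  suffices derivedIdeal C ⊆ AddSubgroup.centralizer {x} from
    (AddSubgroup.mem_centralizer_singleton_iff.mp (this hw)).symm
  refine SetLike.coe_subset_coe.mpr ((AddSubgroup.closure_le _).mpr ?_)
  rintro _ (⟨a, b, rfl⟩ | ⟨a, b, rfl⟩) <;>
    refine AddSubgroup.mem_centralizer_singleton_iff.mpr (add_neg_eq_iff_eq_add.mp ?_)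
  · -- conjugation by `λ_a b` is conjugation by `b` transported along `λ_a`, and on `⟨x⟩`
    -- conjugation by `b` commutes with `λ_a⁻¹`
    have hconj_lam : ∀ y, c (lam a b) y = lam a (c b (lam a⁻¹ y)) := fun y => by
      simp only [c, AddAut.addConj_apply, lam_conj, lam_inv_lam]
    calc c (lam a b + -b) x = lam a (c b (lam a⁻¹ (c (-b) x))) := by rw [hc_add, hconj_lam]
      _ = lam a (lam a⁻¹ (c b (c (-b) x))) :=
        congrArg (lam a) (map_map_comm_of_mem_zmultiples (c b) (lamHom a⁻¹) (hc b) (hlam a⁻¹)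
          (hc (-b)))
      _ = x := by rw [lam_inv_lam]; simp [c, add_assoc]
  · calc c (addCommutator a b) x = c (-a) (c (-b) (c a (c b x))) := by
          simp only [addCommutator, hc_add]
      _ = c (-a) (c (-b) (c b (c a x))) := by
          rw [map_map_comm_of_mem_zmultiples (c a) (c b) (hc a) (hc b) (mem_zmultiples x)]
      _ = x := by rw [hc_neg, hc_neg]

theorem lam_eq_self_of_addCommute {x y w : C} (hx : (addOrderOf x).Prime)
    (hy : y ∈ zmultiples x) (hstar : ∀ b, starOp y b ∈ zmultiples x) (hw : AddCommute x w) :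
    lam y w = w := by
  let K := AddSubgroup.centralizer (zmultiples x : Set C)
  have hwK : w ∈ K := AddSubgroup.mem_centralizer_iff.mpr fun _ hz => by
    obtain ⟨k, rfl⟩ := mem_zmultiples_iff.mp hz
    exact hw.zsmul_left k
  let d : K →+ C := AddMonoidHom.mk' (fun a => starOp y a) fun a b => by
    rw [AddSubgroup.coe_add, starOp_add,
      ← AddSubgroup.mem_centralizer_iff.mp a.2 _ (hstar b), add_neg_cancel_right]
  by_contra hne
  have hd : starOp y w ≠ 0 := fun h => hne (add_neg_eq_zero.mp h)
  obtain ⟨m, hm⟩ := mem_zmultiples_iff.mp <|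
    (zmultiples_eq_of_mem_of_ne_zero hx (hstar w) hd).symm ▸ neg_mem hy
  have hdm : starOp y (m • w) = -y := hm ▸ map_zsmul d m (⟨w, hwK⟩ : K)
  have hfix : y * (m • w) = m • w := by
    rw [mul_eq_add_lam, lam_eq_starOp_add, hdm, add_neg_cancel_left]
  have hy₀ : y = 0 := by rw [← one_eq_zero]; exact mul_eq_right.mp hfix
  exact hne (by rw [hy₀, lam_zero_left])

theorem lam_eq_self_and_addCommute_of_mem_zmultiples {x y w : C} (hx : (addOrderOf x).Prime)
    (hlam : ∀ b, lam b x ∈ zmultiples x) (hconj : ∀ b, b + x + -b ∈ zmultiples x)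
    (hstar : ∀ z ∈ zmultiples x, ∀ b, starOp z b ∈ zmultiples x) (hy : y ∈ zmultiples x)
    (hw : w ∈ derivedIdeal C) : lam y w = w ∧ AddCommute y w := by
  have hxw := addCommute_of_mem_derivedIdeal hlam hconj hw
  obtain ⟨k, rfl⟩ := hy
  exact ⟨lam_eq_self_of_addCommute hx ⟨k, rfl⟩ (hstar _ ⟨k, rfl⟩) hxw, hxw.zsmul_left k⟩

end PrimeOrder

section Ideal

variable {C : Type*} [SkewBrace C] (I : BraceIdeal C)

theorem BraceIdeal.neg_add_mem_iff_inv_mul_mem {a b : C} :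
    -a + b ∈ I.carrier ↔ a⁻¹ * b ∈ I.carrier := by
  rw [inv_mul_eq_lam]
  refine ⟨I.lam_mem a⁻¹, fun h => ?_⟩
  simpa only [inv_inv, lam_inv_lam] using I.lam_mem a⁻¹⁻¹ h

theorem BraceIdeal.starOp_mem {x : C} (hx : x ∈ I.carrier) (b : C) : starOp x b ∈ I.carrier := by
  have hxb : x * b = b + lam b (b⁻¹ * x * b) := by rw [← mul_eq_add_lam]; group
  have h : starOp x b = -x + (b + lam b (b⁻¹ * x * b) + -b) := by
    rw [starOp, lam, hxb, add_assoc]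
  rw [h]
  refine I.add_mem (I.neg_mem hx) (I.addConj_mem b (I.lam_mem b ?_))
  simpa only [inv_inv] using I.mulConj_mem b⁻¹ hx

end Ideal

section Quotient

variable {C : Type*} [SkewBrace C] (I : BraceIdeal C)

def BraceIdeal.setoid : Setoid C where
  r x y := -x + y ∈ I.carrier
  iseqv :=
    ⟨fun _ => by simpa using I.zero_mem, fun h => by simpa using I.neg_mem h,
      fun h₁ h₂ => by simpa [add_assoc] using I.add_mem h₁ h₂⟩

def BraceQuot : Type _ := Quotient I.setoid

namespace BraceQuot

def mk (x : C) : BraceQuot I := Quotient.mk _ x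

variable {I}

theorem mk_eq_mk {x y : C} : mk I x = mk I y ↔ -x + y ∈ I.carrier := Quotient.eq

theorem mk_surjective : Function.Surjective (mk I) := Quotient.mk_surjective

instance : Zero (BraceQuot I) := ⟨mk I 0⟩

instance : One (BraceQuot I) := ⟨mk I 1⟩

instance : Add (BraceQuot I) :=
  ⟨Quotient.map₂ (· + ·) fun x x' (hx : -x + x' ∈ I.carrier) y y'
      (hy : -y + y' ∈ I.carrier) =>
    show -(x + y) + (x' + y') ∈ I.carrier by
      have h := I.add_mem (I.addConj_mem (-y) hx) hy
      simpa only [neg_add_rev, neg_neg, add_assoc, add_neg_cancel_left] using h⟩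

instance : Neg (BraceQuot I) :=
  ⟨Quotient.map (-·) fun x y (h : -x + y ∈ I.carrier) =>
    show -(-x) + -y ∈ I.carrier by
      simpa only [neg_add_rev, neg_neg, add_assoc, add_neg_cancel, add_zero] using
        I.addConj_mem x (I.neg_mem h)⟩

instance : Mul (BraceQuot I) :=
  ⟨Quotient.map₂ (· * ·) fun x x' (hx : -x + x' ∈ I.carrier) y y'
      (hy : -y + y' ∈ I.carrier) =>
    show -(x * y) + x' * y' ∈ I.carrier by
      rw [I.neg_add_mem_iff_inv_mul_mem] at hx hy ⊢
      have h := I.mul_mem (I.mulConj_mem y⁻¹ hx) hy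
      simpa only [inv_inv, mul_inv_rev, mul_assoc, mul_inv_cancel_left] using h⟩

instance : Inv (BraceQuot I) :=
  ⟨Quotient.map (·⁻¹) fun x y (h : -x + y ∈ I.carrier) =>
    show -x⁻¹ + y⁻¹ ∈ I.carrier by
      rw [I.neg_add_mem_iff_inv_mul_mem] at h ⊢
      simpa only [mul_inv_rev, inv_inv, mul_assoc, inv_mul_cancel_left, mul_inv_cancel,
        mul_one] using I.mulConj_mem x (I.inv_mem h)⟩

instance : AddGroup (BraceQuot I) :=
  AddGroup.ofLeftAxioms
    (fun a b c => Quotient.inductionOn₃ a b c fun x y z => congrArg (mk I) (add_assoc x y z))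
    (fun a => Quotient.inductionOn a fun x => congrArg (mk I) (zero_add x))
    (fun a => Quotient.inductionOn a fun x => congrArg (mk I) (neg_add_cancel x))

instance : Group (BraceQuot I) :=
  Group.ofLeftAxioms
    (fun a b c => Quotient.inductionOn₃ a b c fun x y z => congrArg (mk I) (mul_assoc x y z))
    (fun a => Quotient.inductionOn a fun x => congrArg (mk I) (one_mul x))
    (fun a => Quotient.inductionOn a fun x => congrArg (mk I) (inv_mul_cancel x))

instance : SkewBrace (BraceQuot I) where
  one_eq_zero := congrArg (mk I) one_eq_zero
  skew_distrib a b c :=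
    Quotient.inductionOn₃ a b c fun x y z => congrArg (mk I) (skew_distrib x y z)

theorem mk_add (x y : C) : mk I x + mk I y = mk I (x + y) := rfl

variable (I) in
def mkAddHom : C →+ BraceQuot I := AddMonoidHom.mk' (mk I) mk_add

theorem mk_zsmul (n : ℤ) (x : C) : mk I (n • x) = n • mk I x := (mkAddHom I).map_zsmul n x

theorem mk_nsmul (n : ℕ) (x : C) : mk I (n • x) = n • mk I x := (mkAddHom I).map_nsmul n x

theorem mk_eq_zero_iff {x : C} : mk I x = 0 ↔ x ∈ I.carrier := by
  rw [show (0 : BraceQuot I) = mk I 0 from rfl, mk_eq_mk, add_zero]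
  exact ⟨fun h => by simpa using I.neg_mem h, I.neg_mem⟩

theorem mk_mem_derivedIdeal {x : C} (hx : x ∈ derivedIdeal C) :
    mk I x ∈ derivedIdeal (BraceQuot I) := by
  suffices derivedIdeal C ⊆ (AddSubgroup.closure _).comap (mkAddHom I) from this hx
  refine SetLike.coe_subset_coe.mpr ((AddSubgroup.closure_le _).mpr ?_)
  rintro _ (⟨a, b, rfl⟩ | ⟨a, b, rfl⟩)
  · exact starOp_mem_derivedIdeal (mk I a) (mk I b)
  · exact addCommutator_mem_derivedIdeal (mk I a) (mk I b)

end BraceQuot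

end Quotient

section SocleSeries

variable {B : Type*} [SkewBrace B]

open BraceQuot in
theorem memSocQuotRel_derivedIdeal_of_quotPrimeOrder {I J : BraceIdeal B} {p : ℕ}
    (h : QuotPrimeOrder I.carrier J.carrier p) {x : B} (hxJ : x ∈ J.carrier)
    (hxD : x ∈ derivedIdeal B) : MemSocQuotRel (derivedIdeal B) I.carrier x := by
  obtain ⟨hp, x₀, hx₀J, hx₀I, hpx₀, hgen⟩ := h
  have := Fact.mk hp
  set X := BraceQuot.mk I x₀
  have hJX : ∀ y ∈ J.carrier, BraceQuot.mk I y ∈ zmultiples X := fun y hy => by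
    obtain ⟨n, hn⟩ := hgen y hy
    exact mem_zmultiples_iff.mpr ⟨n, by rw [← mk_zsmul]; exact mk_eq_mk.mpr hn⟩
  have hXJ : ∀ y ∈ zmultiples X, ∃ z ∈ J.carrier, BraceQuot.mk I z = y := fun y hy => by
    obtain ⟨n, rfl⟩ := mem_zmultiples_iff.mp hy
    exact ⟨n • x₀, J.addSubgroup.zsmul_mem hx₀J n, mk_zsmul n x₀⟩
  have hX : addOrderOf X = p := addOrderOf_eq_prime
    (by rw [← mk_nsmul, mk_eq_zero_iff]; exact hpx₀) (mt mk_eq_zero_iff.mp hx₀I)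
  have hlam : ∀ b, lam b X ∈ zmultiples X := fun b => by
    obtain ⟨b, rfl⟩ := mk_surjective b
    exact hJX _ (J.lam_mem b hx₀J)
  have hconj : ∀ b, b + X + -b ∈ zmultiples X := fun b => by
    obtain ⟨b, rfl⟩ := mk_surjective b
    exact hJX _ (J.addConj_mem b hx₀J)
  have hstar : ∀ y ∈ zmultiples X, ∀ b, starOp y b ∈ zmultiples X := fun y hy b => by
    obtain ⟨z, hzJ, rfl⟩ := hXJ y hy
    obtain ⟨b, rfl⟩ := mk_surjective b
    exact hJX _ (J.starOp_mem hzJ b)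
  have key {w : B} (hw : w ∈ derivedIdeal B) :=
    lam_eq_self_and_addCommute_of_mem_zmultiples (hX ▸ hp) hlam hconj hstar (hJX x hxJ)
      (mk_mem_derivedIdeal (I := I) hw)
  exact ⟨hxD, fun w hw => mk_eq_mk.mp (key hw).1.symm, fun w hw => mk_eq_mk.mp (key hw).2.symm⟩

theorem MemSocQuotRel.mono_left {D D' J : Set B} {x : B} (hx : MemSocQuotRel D' J x)
    (hD : D ⊆ D') (hxD : x ∈ D) : MemSocQuotRel D J x :=
  ⟨hxD, fun y hy => hx.2.1 y (hD hy), fun y hy => hx.2.2 y (hD hy)⟩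

theorem memSocQuotRel_derivedIdeal_of_factor {I J : BraceIdeal B}
    (h : (QuotAddInfCyclic I.carrier J.carrier ∧ ∀ x ∈ J.carrier, MemSocQuot I.carrier x) ∨
      ∃ p, QuotPrimeOrder I.carrier J.carrier p)
    {x : B} (hx : x ∈ J.carrier ∩ derivedIdeal B) :
    MemSocQuotRel (derivedIdeal B) I.carrier x := by
  rcases h with ⟨-, hsoc⟩ | ⟨p, hp⟩
  · exact (hsoc x hx.1).mono_left (Set.subset_univ _) hx.2
  · exact memSocQuotRel_derivedIdeal_of_quotPrimeOrder hp hx.1 hx.2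

theorem MemSocQuotRel.derivedIdeal_mono {J J' : Set B} (hJ : J ∩ derivedIdeal B ⊆ J') {x : B}
    (hx : MemSocQuotRel (derivedIdeal B) J x) : MemSocQuotRel (derivedIdeal B) J' x :=
  ⟨hx.1, fun y hy => hJ ⟨hx.2.1 y hy, neg_add_lam_mem_derivedIdeal x y⟩,
    fun y hy => hJ ⟨hx.2.2 y hy, neg_add_add_eq_addCommutator x y ▸
      addCommutator_mem_derivedIdeal x y⟩⟩

theorem socChainRel_subset {D : Set B} (hD : (0 : B) ∈ D) : ∀ n, socChainRel D n ⊆ D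
  | 0 => Set.singleton_subset_iff.mpr hD
  | _ + 1 => fun _ hx => hx.1

end SocleSeries

/-- For a supersoluble brace `B`, the derived ideal `∂(B)` has finite
multipermutational level: `∂(B) = Soc_n(∂(B))` for some `n`. -/
theorem derivedIdeal_finite_multipermutational_level (B : Type*) [SkewBrace B]
    (hB : IsSupersoluble B) :
    ∃ n : ℕ, socChainRel (derivedIdeal B) n = derivedIdeal B := by
  obtain ⟨n, I, hI₀, hIn, -, hfactor⟩ := hB
  have hsoc : ∀ i ≤ n, (I i).carrier ∩ derivedIdeal B ⊆ socChainRel (derivedIdeal B) i := by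
    intro i
    induction i with
    | zero => exact fun _ => hI₀ ▸ Set.inter_subset_left
    | succ i ih =>
      intro hi x hx
      exact (memSocQuotRel_derivedIdeal_of_factor (hfactor i hi) hx).derivedIdeal_mono
        (ih (Nat.le_of_succ_le hi))
  refine ⟨n, (socChainRel_subset (AddSubgroup.closure _).zero_mem n).antisymm fun x hx => ?_⟩
  exact hsoc n le_rfl ⟨hIn ▸ Set.mem_univ x, hx⟩

end SkewBrace
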